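/- arXiv:1906.01533 — 3 statements merged into one kernel-verified Lean document; each statement's English description precedes it below -/
import Mathlib

section
/- Let G be a finite multigraph whose (k+1)-core is empty, i.e., every nonempty subgraph of G has a vertex of degree at most k. Then the edge set of G can be partitioned into k forests (equivalently, G has rank equal to its number of edges in the union of k copies of the cycle matroid). -/
/-!
Peeling off a vertex of degree at most `k` again and again gives a degeneracy order of the
vertices. Orient every edge from its earlier to its later endpoint: each vertex is then the
tail of at most `k` edges, so its out-edges can be given pairwise distinct colours in `Fin k`.
Within one colour class every vertex is the tail of at most one edge, and no edge has the
latest vertex of a subgraph as its tail; hence a set of `m` edges of one colour has `m`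
distinct tails besides that vertex, and spans at least `m + 1` vertices.
-/

open scoped Classical

/-- An edge set `S` is a forest (acyclic) iff every nonempty subset spans
strictly more vertices than it has edges. -/
noncomputable def IsForestEdgeSet {V E : Type*} [Fintype V] [Fintype E]
    (ends : E → Sym2 V) (S : Finset E) : Prop :=
  ∀ S' ⊆ S, S'.Nonempty →
    S'.card + 1 ≤ (Finset.univ.filter (fun v : V => ∃ e ∈ S', v ∈ ends e)).card

open Finset

namespace Sym2

theorem exists_eq_mk_lt_of_not_isDiag {V α : Type*} [LinearOrder α] {r : V → α}
    (hr : Function.Injective r) {z : Sym2 V} (hz : ¬ z.IsDiag) :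
    ∃ a b, z = s(a, b) ∧ r a < r b := by
  induction z using Sym2.ind with
  | _ a b =>
    have hab : r a ≠ r b := hr.ne (by simpa using hz)
    rcases hab.lt_or_gt with h | h
    · exact ⟨a, b, rfl, h⟩
    · exact ⟨b, a, Sym2.eq_swap, h⟩

end Sym2

theorem exists_fin_injective_prod_of_card_fiber_le {V ι : Type*} [Fintype ι]
    (a : ι → V) (k : ℕ) (h : ∀ v, #{i | a i = v} ≤ k) :
    ∃ f : ι → Fin k, Function.Injective fun i => (a i, f i) := by
  have g (v : V) : {i // a i = v} ↪ Fin k := Classical.choice <|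
    Function.Embedding.nonempty_of_card_le (by simpa [Fintype.card_subtype] using h v)
  have hg : ∀ v w (x : {i // a i = v}) (y : {i // a i = w}), v = w → g v x = g w y →
      x.1 = y.1 := by
    rintro v _ x y rfl hxy
    exact congrArg Subtype.val ((g v).injective hxy)
  refine ⟨fun i => g (a i) ⟨i, rfl⟩, fun i j hij => ?_⟩
  simp only [Prod.mk.injEq] at hij
  exact hg _ _ _ _ hij.1 hij.2

section

variable {V E : Type*} [Fintype V] [Fintype E]

theorem exists_degeneracy_rank_on (ends : E → Sym2 V) (k : ℕ)
    (hcore : ∀ A : Finset V, A.Nonempty → ∃ v ∈ A,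
      #{e | v ∈ ends e ∧ ∀ u ∈ ends e, u ∈ A} ≤ k)
    (A : Finset V) :
    ∃ r : V → ℕ, Set.InjOn r A ∧
      ∀ v ∈ A, #{e | v ∈ ends e ∧ ∀ u ∈ ends e, u ∈ A ∧ r v ≤ r u} ≤ k := by
  induction A using Finset.strongInduction with
  | _ A ih =>
  rcases A.eq_empty_or_nonempty with rfl | hA
  · exact ⟨fun _ => 0, by simp, by simp⟩
  obtain ⟨v, hv, hvk⟩ := hcore A hA
  obtain ⟨r, hinj, hr⟩ := ih (A.erase v) (erase_ssubset hv)
  let r' : V → ℕ := fun u => if u = v then 0 else r u + 1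
  refine ⟨r', ?_, fun u hu => ?_⟩
  · intro u hu w hw huw
    by_cases hu' : u = v <;> by_cases hw' : w = v <;> simp [r', hu', hw'] at huw
    · exact hu'.trans hw'.symm
    · exact hinj (mem_erase.2 ⟨hu', hu⟩) (mem_erase.2 ⟨hw', hw⟩) huw
  by_cases huv : u = v
  · subst huv
    refine le_trans (card_le_card fun e he => ?_) hvk
    simp only [mem_filter, mem_univ, true_and] at he ⊢
    exact ⟨he.1, fun w hw => (he.2 w hw).1⟩
  refine le_trans (card_le_card fun e he => ?_) (hr u (mem_erase.2 ⟨huv, hu⟩))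
  simp only [mem_filter, mem_univ, true_and] at he ⊢
  refine ⟨he.1, fun w hw => ?_⟩
  obtain ⟨hwA, hle⟩ := he.2 w hw
  have hwv : w ≠ v := by
    rintro rfl
    simp [r', huv] at hle
  simp only [r', huv, hwv, if_false, add_le_add_iff_right] at hle
  exact ⟨mem_erase.2 ⟨hwv, hwA⟩, hle⟩

theorem exists_injective_degeneracy_rank (ends : E → Sym2 V) (k : ℕ)
    (hcore : ∀ A : Finset V, A.Nonempty → ∃ v ∈ A,
      #{e | v ∈ ends e ∧ ∀ u ∈ ends e, u ∈ A} ≤ k) :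
    ∃ r : V → ℕ, Function.Injective r ∧
      ∀ v, #{e | v ∈ ends e ∧ ∀ u ∈ ends e, r v ≤ r u} ≤ k := by
  obtain ⟨r, hinj, hr⟩ := exists_degeneracy_rank_on ends k hcore univ
  exact ⟨r, fun x y h => hinj (mem_univ x) (mem_univ y) h, fun v => by
    simpa using hr v (mem_univ v)⟩

theorem isForestEdgeSet_of_injOn_tail {α : Type*} [LinearOrder α] (ends : E → Sym2 V)
    (r : V → α) (tail head : E → V) (S : Finset E)
    (hends : ∀ e ∈ S, ends e = s(tail e, head e)) (hlt : ∀ e ∈ S, r (tail e) < r (head e))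
    (hinj : Set.InjOn tail S) :
    IsForestEdgeSet ends S := by
  intro S' hS' ⟨e₀, he₀⟩
  set span := ({v | ∃ e ∈ S', v ∈ ends e} : Finset V)
  have tail_mem : ∀ e ∈ S', tail e ∈ span := fun e he =>
    mem_filter.2 ⟨mem_univ _, e, he, by simp [hends e (hS' he)]⟩
  have head_mem : ∀ e ∈ S', head e ∈ span := fun e he =>
    mem_filter.2 ⟨mem_univ _, e, he, by simp [hends e (hS' he)]⟩
  obtain ⟨w, hw, hmax⟩ := span.exists_max_image r ⟨_, tail_mem e₀ he₀⟩
  have himage : S'.image tail ⊆ span.erase w := by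
    simp only [subset_iff, mem_image, mem_erase, forall_exists_index, and_imp]
    rintro _ e he rfl
    refine ⟨fun htw => ?_, tail_mem e he⟩
    have := hmax _ (head_mem e he)
    exact (hlt e (hS' he)).not_ge (htw ▸ this)
  calc #S' + 1 = #(S'.image tail) + 1 := by
        rw [card_image_of_injOn (hinj.mono (coe_subset.2 hS'))]
    _ ≤ #(span.erase w) + 1 := by gcongr
    _ = #span := card_erase_add_one hw

end

theorem stmt3_general {V E : Type*} [Fintype V] [Fintype E] (ends : E → Sym2 V)
    (hloop : ∀ e, ¬ (ends e).IsDiag) (k : ℕ)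
    (hcore : ∀ A : Finset V, A.Nonempty → ∃ v ∈ A,
      (Finset.univ.filter
        (fun e : E => v ∈ ends e ∧ ∀ u ∈ ends e, u ∈ A)).card ≤ k) :
    ∃ f : E → Fin k, ∀ j : Fin k,
      IsForestEdgeSet ends (Finset.univ.filter (fun e => f e = j)) := by
  obtain ⟨r, hinj, hr⟩ := exists_injective_degeneracy_rank ends k hcore
  choose tail head hends hlt using fun e => Sym2.exists_eq_mk_lt_of_not_isDiag hinj (hloop e)
  have hout : ∀ v, #{e | tail e = v} ≤ k := fun v => by
    refine le_trans (card_le_card fun e he => ?_) (hr v)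
    simp only [mem_filter, mem_univ, true_and, hends] at he ⊢
    subst he
    simp only [Sym2.mem_iff, forall_eq_or_imp, le_refl, forall_eq, true_or, true_and]
    exact (hlt e).le
  obtain ⟨f, hf⟩ := exists_fin_injective_prod_of_card_fiber_le tail k hout
  refine ⟨f, fun j => isForestEdgeSet_of_injOn_tail ends r tail head _
    (fun e _ => hends e) (fun e _ => hlt e) fun e₁ he₁ e₂ he₂ htail => hf ?_⟩
  simp only [coe_filter, Set.mem_ofPred_eq, mem_univ, true_and] at he₁ he₂
  simp [htail, he₁, he₂]

/-- If a finite loopless multigraph has empty `(k+1)`-core, i.e. every induced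
subgraph on a nonempty vertex set has a vertex of degree at most `k`, then its
edge set can be partitioned into `k` forests. -/
theorem stmt3 {V E : Type*} [Fintype V] [Fintype E] (ends : E → Sym2 V)
    (hloop : ∀ e, ¬ (ends e).IsDiag) (k : ℕ) (hk : 1 ≤ k)
    (hcore : ∀ A : Finset V, A.Nonempty → ∃ v ∈ A,
      (Finset.univ.filter
        (fun e : E => v ∈ ends e ∧ ∀ u ∈ ends e, u ∈ A)).card ≤ k) :
    ∃ f : E → Fin k, ∀ j : Fin k,
      IsForestEdgeSet ends (Finset.univ.filter (fun e => f e = j)) :=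
  stmt3_general ends hloop k hcore
end

section
/- Let (γ_k)_{k≥1} be an increasing sequence of nonnegative reals with partial sums Γ_k = ∑_{i=1}^k γ_i satisfying k² ≤ Γ_k ≤ k² + k for all k ≥ 1. Then for every k ≥ 1, 2k − 2√k ≤ γ_k ≤ 2k + 2√k. -/
/-!
Averaging `γ` over `t` consecutive indices ending at `k`, resp. starting at `k`, monotonicity gives
`t γ_k ≥ Γ_k - Γ_{k-t} ≥ 2kt - t² - k + t` and `t γ_k ≤ Γ_{k-1+t} - Γ_{k-1} ≤ 2kt + t² - t + k - 1`.
After dividing by `t`, both claimed bounds reduce to `(t - √k)² ≤ t`, which holds for the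
window length `t = ⌈√k⌉` because `0 ≤ t - √k < 1`.
-/

open Finset

theorem sq_natCeil_sub_self_le {α : Type*} [Field α] [LinearOrder α] [IsStrictOrderedRing α]
    [FloorSemiring α] {s : α} (hs : 0 ≤ s) : ((⌈s⌉₊ : α) - s) ^ 2 ≤ ⌈s⌉₊ := by
  have h₀ : s ≤ ⌈s⌉₊ := Nat.le_ceil s
  have h₁ : (⌈s⌉₊ : α) < s + 1 := Nat.ceil_lt_add_one hs
  nlinarith

theorem sum_Icc_one_add_sum_Ioc {M : Type*} [AddCommMonoid M] (f : ℕ → M) {m n : ℕ}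
    (hmn : m ≤ n) : ∑ i ∈ Icc 1 m, f i + ∑ i ∈ Ioc m n, f i = ∑ i ∈ Icc 1 n, f i := by
  have hIcc (n : ℕ) : Icc 1 n = Ioc 0 n := Icc_add_one_left_eq_Ioc 0 n
  rw [hIcc, hIcc, sum_Ioc_consecutive _ m.zero_le hmn]

section QuadraticPartialSums

variable {γ : ℕ → ℝ} (hγ : Monotone γ)
  (hsum : ∀ n : ℕ, (n : ℝ) ^ 2 ≤ ∑ i ∈ Icc 1 n, γ i ∧ ∑ i ∈ Icc 1 n, γ i ≤ (n : ℝ) ^ 2 + n)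
include hγ hsum

theorem sq_sub_le_mul_of_le {k t : ℕ} (htk : t ≤ k) :
    (k : ℝ) ^ 2 - (((k : ℝ) - t) ^ 2 + ((k : ℝ) - t)) ≤ t * γ k := by
  obtain ⟨m, rfl⟩ := Nat.exists_eq_add_of_le' htk
  have hwindow : ∑ i ∈ Ioc m (m + t), γ i ≤ t * γ (m + t) := by
    simpa using sum_le_card_nsmul (Ioc m (m + t)) γ _ fun i hi => hγ (mem_Ioc.mp hi).2
  have hsplit := sum_Icc_one_add_sum_Ioc γ (Nat.le_add_right m t)
  have hm := (hsum m).2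
  have hmt := (hsum (m + t)).1
  push_cast at *
  linarith

theorem mul_le_sq_sub {k : ℕ} (hk : 1 ≤ k) (t : ℕ) :
    t * γ k ≤ ((k : ℝ) - 1 + t) ^ 2 + ((k : ℝ) - 1 + t) - ((k : ℝ) - 1) ^ 2 := by
  obtain ⟨m, rfl⟩ := Nat.exists_eq_add_of_le' hk
  have hwindow : t * γ (m + 1) ≤ ∑ i ∈ Ioc m (m + t), γ i := by
    simpa using card_nsmul_le_sum (Ioc m (m + t)) γ _ fun i hi => hγ (mem_Ioc.mp hi).1
  have hsplit := sum_Icc_one_add_sum_Ioc γ (Nat.le_add_right m t)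
  have hm := (hsum m).1
  have hmt := (hsum (m + t)).2
  push_cast at *
  linarith

end QuadraticPartialSums

theorem stmt8_general (γ : ℕ → ℝ) (hmono : Monotone γ)
    (Γ : ℕ → ℝ) (hΓ : ∀ k, Γ k = ∑ i ∈ Finset.Icc 1 k, γ i)
    (hbound : ∀ k : ℕ, 1 ≤ k → (k : ℝ) ^ 2 ≤ Γ k ∧ Γ k ≤ (k : ℝ) ^ 2 + k) :
    ∀ k : ℕ, 1 ≤ k →
      2 * (k : ℝ) - 2 * Real.sqrt k ≤ γ k ∧ γ k ≤ 2 * (k : ℝ) + 2 * Real.sqrt k := by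
  have hsum : ∀ n : ℕ, (n : ℝ) ^ 2 ≤ ∑ i ∈ Icc 1 n, γ i ∧ ∑ i ∈ Icc 1 n, γ i ≤ (n : ℝ) ^ 2 + n := by
    rintro (_ | n)
    · simp
    · simpa only [hΓ] using hbound (n + 1) n.succ_pos
  intro k hk
  have hs : √(k : ℝ) ^ 2 = k := Real.sq_sqrt k.cast_nonneg
  have hk₁ : (1 : ℝ) ≤ k := by exact_mod_cast hk
  have hts := sq_natCeil_sub_self_le (Real.sqrt_nonneg (k : ℝ))
  have ht : (0 : ℝ) < ⌈√(k : ℝ)⌉₊ := by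
    exact_mod_cast Nat.ceil_pos.mpr (Real.sqrt_pos.mpr (by linarith))
  have htk : ⌈√(k : ℝ)⌉₊ ≤ k := Nat.ceil_le.mpr <|
    (Real.sqrt_le_left k.cast_nonneg).mpr (by nlinarith)
  constructor
  · have hwindow := sq_sub_le_mul_of_le hmono hsum htk
    refine le_of_mul_le_mul_left ?_ ht
    nlinarith
  · have hwindow := mul_le_sq_sub hmono hsum hk ⌈√(k : ℝ)⌉₊
    refine le_of_mul_le_mul_left ?_ ht
    nlinarith

/-- If `(γ_k)_{k≥1}` is a nondecreasing sequence of nonnegative reals whose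
partial sums `Γ_k = ∑_{i=1}^k γ_i` satisfy `k² ≤ Γ_k ≤ k² + k` for all
`k ≥ 1`, then `2k − 2√k ≤ γ_k ≤ 2k + 2√k` for every `k ≥ 1`. -/
theorem stmt8 (γ : ℕ → ℝ) (hmono : Monotone γ) (hpos : ∀ k, 0 ≤ γ k)
    (Γ : ℕ → ℝ) (hΓ : ∀ k, Γ k = ∑ i ∈ Finset.Icc 1 k, γ i)
    (hbound : ∀ k : ℕ, 1 ≤ k → (k : ℝ) ^ 2 ≤ Γ k ∧ Γ k ≤ (k : ℝ) ^ 2 + k) :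
    ∀ k : ℕ, 1 ≤ k →
      2 * (k : ℝ) - 2 * Real.sqrt k ≤ γ k ∧ γ k ≤ 2 * (k : ℝ) + 2 * Real.sqrt k :=
  stmt8_general γ hmono Γ hΓ hbound
end

section
/- Let (γ_k) be an increasing sequence with partial sums Γ_k satisfying k² ≤ Γ_k ≤ k²+k for all k. Then for any integers k ≥ 1 and ℓ ≥ 1, γ_k ≤ 2k − 1 + ℓ + (k−1)/ℓ, and for 1 ≤ ℓ ≤ k, γ_k ≥ 2k + 1 − ℓ − k/ℓ. -/
/-- If `(γ_k)_{k≥1}` is a nondecreasing real sequence whose partial sums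
`Γ_k = ∑_{i=1}^k γ_i` satisfy `k² ≤ Γ_k ≤ k² + k` for all `k ≥ 1`, then for all
integers `k, ℓ ≥ 1` we have `γ_k ≤ 2k − 1 + ℓ + (k−1)/ℓ`, and for
`1 ≤ ℓ ≤ k` we have `γ_k ≥ 2k + 1 − ℓ − k/ℓ`. -/
theorem stmt9 (γ : ℕ → ℝ) (hmono : Monotone γ)
    (Γ : ℕ → ℝ) (hΓ : ∀ k, Γ k = ∑ i ∈ Finset.Icc 1 k, γ i)
    (hbound : ∀ k : ℕ, 1 ≤ k → (k : ℝ) ^ 2 ≤ Γ k ∧ Γ k ≤ (k : ℝ) ^ 2 + k) :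
    ∀ k l : ℕ, 1 ≤ k → 1 ≤ l →
      (γ k ≤ 2 * (k : ℝ) - 1 + l + ((k : ℝ) - 1) / l) ∧
      (l ≤ k → 2 * (k : ℝ) + 1 - l - (k : ℝ) / l ≤ γ k) := by
  have hΓIoc : ∀ n, Γ n = ∑ i ∈ Finset.Ioc 0 n, γ i := by
    intro n
    rw [hΓ]
    rw [show Finset.Icc 1 n = Finset.Ioc 0 n from Finset.Icc_add_one_left_eq_Ioc 0 n]
  have hΓ0 : Γ 0 = 0 := by rw [hΓ]; simp
  have hdiff : ∀ a b : ℕ, a ≤ b → Γ b - Γ a = ∑ i ∈ Finset.Ioc a b, γ i := by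
    intro a b hab
    rw [hΓIoc, hΓIoc, ← Finset.sum_Ioc_consecutive γ (Nat.zero_le a) hab]
    ring
  have hub : ∀ n : ℕ, Γ n ≤ (n : ℝ) ^ 2 + n := by
    intro n
    rcases Nat.eq_zero_or_pos n with h | h
    · simp [h, hΓ0]
    · exact (hbound n h).2
  have hlb : ∀ n : ℕ, (n : ℝ) ^ 2 ≤ Γ n := by
    intro n
    rcases Nat.eq_zero_or_pos n with h | h
    · simp [h, hΓ0]
    · exact (hbound n h).1
  intro k l hk hl
  have hlR : (0 : ℝ) < l := by exact_mod_cast hl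
  have hlne : (l : ℝ) ≠ 0 := ne_of_gt hlR
  obtain ⟨m, rfl⟩ : ∃ m, k = m + 1 := ⟨k - 1, (Nat.succ_pred_eq_of_pos hk).symm⟩
  constructor
  · -- upper bound
    have h1 : (l : ℝ) * γ (m + 1) ≤ Γ (m + l) - Γ m := by
      rw [hdiff m (m + l) (Nat.le_add_right m l)]
      have := Finset.card_nsmul_le_sum (Finset.Ioc m (m + l)) γ (γ (m + 1))
        (fun i hi => hmono (Finset.mem_Ioc.mp hi).1)
      simpa [Nat.card_Ioc, nsmul_eq_mul] using this
    have h2 : Γ (m + l) - Γ m ≤ ((m : ℝ) + l) ^ 2 + ((m : ℝ) + l) - (m : ℝ) ^ 2 := by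
      have hu := hub (m + l)
      have hlo := hlb m
      push_cast at hu
      linarith
    have key : (l : ℝ) * γ (m + 1) ≤ (l : ℝ) * (2 * ((m : ℝ) + 1) - 1 + l) + m := by
      nlinarith [h1, h2]
    have heq : (l : ℝ) * (2 * ((m : ℝ) + 1) - 1 + l + (((m : ℝ) + 1) - 1) / l)
        = (l : ℝ) * (2 * ((m : ℝ) + 1) - 1 + l) + m := by
      field_simp
      ring
    have := heq ▸ key
    push_cast
    exact le_of_mul_le_mul_left this hlR
  · -- lower bound
    intro hlk
    obtain ⟨j, hj⟩ : ∃ j, m + 1 = j + l := ⟨m + 1 - l, by omega⟩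
    rw [hj]
    have h1 : Γ (j + l) - Γ j ≤ (l : ℝ) * γ (j + l) := by
      rw [hdiff j (j + l) (Nat.le_add_right j l)]
      have := Finset.sum_le_card_nsmul (Finset.Ioc j (j + l)) γ (γ (j + l))
        (fun i hi => hmono (Finset.mem_Ioc.mp hi).2)
      simpa [Nat.card_Ioc, nsmul_eq_mul] using this
    have h2 : ((j : ℝ) + l) ^ 2 - ((j : ℝ) ^ 2 + j) ≤ Γ (j + l) - Γ j := by
      have hu := hub j
      have hlo := hlb (j + l)
      push_cast at hlo
      linarith
    have key : (l : ℝ) * (2 * ((j : ℝ) + l) + 1 - l) - j - l ≤ (l : ℝ) * γ (j + l) := by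
      nlinarith [h1, h2]
    have heq : (l : ℝ) * (2 * ((j : ℝ) + l) + 1 - l - ((j : ℝ) + l) / l)
        = (l : ℝ) * (2 * ((j : ℝ) + l) + 1 - l) - j - l := by
      field_simp
      ring
    have key2 : (l : ℝ) * (2 * ((j : ℝ) + l) + 1 - l - ((j : ℝ) + l) / l)
        ≤ (l : ℝ) * γ (j + l) := by
      rw [heq]; exact key
    push_cast
    exact le_of_mul_le_mul_left key2 hlR
end
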